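/- arXiv:1309.4594 — 8 statements merged into one kernel-verified Lean document; each statement's English description precedes it below -/
import Mathlib

section
/- For every complex number z, |(1 − z)·exp(z)| ≤ exp(|z|²/2). -/
/-
Squaring, `‖1 - z‖² = 1 - 2 Re z + ‖z‖² ≤ exp (‖z‖² - 2 Re z)` by `1 + t ≤ exp t`, and the factor
`‖exp z‖² = exp (2 Re z)` cancels the `- 2 Re z` in the exponent.
-/

namespace Complex

theorem norm_one_sub_sq (z : ℂ) : ‖1 - z‖ ^ 2 = 1 - 2 * z.re + ‖z‖ ^ 2 := by
  simp only [Complex.sq_norm, normSq_apply, sub_re, sub_im, one_re, one_im]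
  ring

theorem norm_one_sub_sq_le_exp (z : ℂ) : ‖1 - z‖ ^ 2 ≤ Real.exp (‖z‖ ^ 2 - 2 * z.re) := by
  rw [norm_one_sub_sq]
  linarith [Real.add_one_le_exp (‖z‖ ^ 2 - 2 * z.re)]

end Complex

theorem abs_one_sub_mul_exp_le (z : ℂ) :
    ‖(1 - z) * Complex.exp z‖ ≤ Real.exp (‖z‖ ^ 2 / 2) := by
  rw [← pow_le_pow_iff_left₀ (norm_nonneg _) (Real.exp_nonneg _) two_ne_zero]
  calc ‖(1 - z) * Complex.exp z‖ ^ 2 = ‖1 - z‖ ^ 2 * Real.exp (2 * z.re) := by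
        rw [norm_mul, mul_pow, Complex.norm_exp, ← Real.exp_nat_mul]; norm_num
    _ ≤ Real.exp (‖z‖ ^ 2 - 2 * z.re) * Real.exp (2 * z.re) := by
        gcongr; exact Complex.norm_one_sub_sq_le_exp z
    _ = Real.exp (‖z‖ ^ 2 / 2) ^ 2 := by
        rw [← Real.exp_add, ← Real.exp_nat_mul]; ring_nf
end

section
/- Let h : 𝔻 → ℂ be holomorphic with h(0) = 1, and suppose there are α > 0 and C₀ ≥ 0 with log|h(w)| ≤ C₀ / (1−|w|)^α for all w ∈ 𝔻. Then for every τ > 0 there is a constant C(α, τ) > 0, independent of h and C₀, such that the sum over the zeros w of h in 𝔻, counted with multiplicity, satisfies ∑_{w ∈ 𝒵(h)} (1−|w|)^{α+τ+1} ≤ C(α, τ) · C₀. -/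
/-!
Jensen's inequality on the circle of radius `1 - t / 2` bounds the number of zeros with
`1 - |w| ≥ t` by `2 ^ (α + 1) * C₀ / t ^ (α + 1)`. Grouping the zeros into the dyadic layers
`2⁻¹ ^ (k + 1) < 1 - |w| ≤ 2⁻¹ ^ k`, the `k`-th layer contributes at most
`4 ^ (α + 1) * C₀ * (2⁻¹ ^ τ) ^ k`, and these bounds sum to a geometric series.
-/

open Complex Metric

open MeromorphicOn in
theorem AnalyticOnNhd.sum_le_finsum_divisor {f : ℂ → ℂ} {U : Set ℂ} (hU : IsCompact U)
    (hf : AnalyticOnNhd ℂ f U) {S : Finset ℂ} (hSU : ∀ w ∈ S, w ∈ U) {m : ℂ → ℕ}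
    (hm : ∀ w ∈ S, analyticOrderAt f w = m w) :
    ∑ w ∈ S, (m w : ℤ) ≤ ∑ᶠ u, divisor f U u := by
  classical
  have hfin := (divisor f U).finiteSupport hU
  rw [finsum_eq_sum_of_support_subset _ (s := S ∪ hfin.toFinset) (by simp)]
  calc ∑ w ∈ S, (m w : ℤ) = ∑ w ∈ S, divisor f U w :=
        Finset.sum_congr rfl fun w hw => by simp [hf.divisor_apply (hSU w hw), hm w hw]
    _ ≤ _ := Finset.sum_le_sum_of_subset_of_nonneg Finset.subset_union_left
        fun w _ _ => hf.divisor_nonneg w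

theorem AnalyticOnNhd.sum_analyticOrderAt_le {f : ℂ → ℂ} {r R M : ℝ} (hr : 0 < r) (hrR : r < R)
    (hM : 1 ≤ M) (hf : AnalyticOnNhd ℂ f (closedBall 0 R)) (hf0 : f 0 ≠ 0)
    (hfM : ∀ z ∈ sphere 0 R, ‖f z‖ ≤ M) (S : Finset ℂ) {m : ℂ → ℕ}
    (hm : ∀ w ∈ S, analyticOrderAt f w = m w) :
    ∑ w ∈ S with ‖w‖ ≤ r, (m w : ℝ) ≤ Real.log (M / ‖f 0‖) / Real.log (R / r) := by
  have hR : |R| = R := abs_of_pos (hr.trans hrR)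
  have jensen := AnalyticOnNhd.sum_divisor_le (c := 0) (r := r) (R := R)
    (by rwa [abs_of_pos hr]) (by rwa [abs_of_pos hr, hR]) hM (by rwa [hR]) hf0 (by rwa [hR])
  refine le_trans ?_ jensen
  have hfr : AnalyticOnNhd ℂ f (closedBall 0 |r|) :=
    hf.mono (closedBall_subset_closedBall (by rw [abs_of_pos hr]; exact hrR.le))
  exact_mod_cast hfr.sum_le_finsum_divisor (isCompact_closedBall _ _)
    (fun w hw => by simpa [abs_of_pos hr] using (Finset.mem_filter.mp hw).2)
    (fun w hw => hm w (Finset.mem_filter.mp hw).1)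

theorem sub_le_log_div {r R : ℝ} (hr : 0 < r) (hrR : r ≤ R) (hR : R ≤ 1) :
    R - r ≤ Real.log (R / r) := by
  have hR0 : 0 < R := hr.trans_le hrR
  calc R - r ≤ (R - r) / R := le_div_self (by linarith) hR0 hR
    _ = 1 - (R / r)⁻¹ := by field_simp
    _ ≤ Real.log (R / r) := Real.one_sub_inv_le_log_of_pos (by positivity)

theorem sum_analyticOrderAt_le_of_log_norm_le {h : ℂ → ℂ} {α C₀ t : ℝ} (hC₀ : 0 ≤ C₀)
    (hh : DifferentiableOn ℂ h (ball 0 1)) (h0 : h 0 = 1)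
    (hgrowth : ∀ w ∈ ball (0 : ℂ) 1, Real.log ‖h w‖ ≤ C₀ / (1 - ‖w‖) ^ α)
    (S : Finset ℂ) {m : ℂ → ℕ} (hm : ∀ w ∈ S, analyticOrderAt h w = m w) (ht0 : 0 < t)
    (ht1 : t < 1) :
    ∑ w ∈ S with t ≤ 1 - ‖w‖, (m w : ℝ) ≤ 2 ^ (α + 1) * C₀ / t ^ (α + 1) := by
  set B := C₀ / (t / 2) ^ α
  have hB : 0 ≤ B := by positivity
  have hbound : ∀ z ∈ sphere (0 : ℂ) (1 - t / 2), ‖h z‖ ≤ Real.exp B := by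
    intro z hz
    have hz' : ‖z‖ = 1 - t / 2 := by simpa using hz
    rcases (norm_nonneg (h z)).eq_or_lt with hz0 | hz0
    · rw [← hz0]; exact (Real.exp_pos B).le
    · rw [← Real.log_le_iff_le_exp hz0]
      simpa [hz', B] using hgrowth z (by simp [hz']; linarith)
  have hcount := (hh.analyticOnNhd isOpen_ball).mono (closedBall_subset_ball (by linarith))
    |>.sum_analyticOrderAt_le (r := 1 - t) (by linarith) (by linarith)
      (Real.one_le_exp hB) (by simp [h0]) hbound S hm
  rw [h0, norm_one, div_one, Real.log_exp] at hcount
  calc ∑ w ∈ S with t ≤ 1 - ‖w‖, (m w : ℝ) = ∑ w ∈ S with ‖w‖ ≤ 1 - t, (m w : ℝ) := by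
        congr 1; exact Finset.filter_congr fun w _ => by constructor <;> intro <;> linarith
    _ ≤ B / Real.log ((1 - t / 2) / (1 - t)) := hcount
    _ ≤ B / (t / 2) := by
        refine div_le_div_of_nonneg_left hB (by positivity) ?_
        linarith [sub_le_log_div (r := 1 - t) (R := 1 - t / 2) (by linarith) (by linarith)
          (by linarith)]
    _ = 2 ^ (α + 1) * C₀ / t ^ (α + 1) := by
        rw [show B = C₀ / (t / 2) ^ α from rfl, Real.div_rpow ht0.le (by norm_num),
          Real.rpow_add_one (by norm_num), Real.rpow_add_one ht0.ne']
        have : 0 < t ^ α := by positivity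
        have : 0 < (2 : ℝ) ^ α := by positivity
        field_simp

theorem Finset.sum_pow_le_inv_one_sub {q : ℝ} (hq0 : 0 ≤ q) (hq1 : q < 1) (T : Finset ℕ) :
    ∑ k ∈ T, q ^ k ≤ (1 - q)⁻¹ :=
  tsum_geometric_of_lt_one hq0 hq1 ▸
    (summable_geometric_of_lt_one hq0 hq1).sum_le_tsum T fun k _ => pow_nonneg hq0 k

theorem Finset.sum_mul_rpow_le_of_sum_filter_le {ι : Type*} (S : Finset ι) {m δ : ι → ℝ}
    {A γ τ : ℝ} (hm : ∀ i ∈ S, 0 ≤ m i) (hδ : ∀ i ∈ S, 0 < δ i ∧ δ i ≤ 1) (hγτ : 0 ≤ γ + τ)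
    (hτ : 0 < τ) (hcount : ∀ t, 0 < t → t < 1 → ∑ i ∈ S with t ≤ δ i, m i ≤ A / t ^ γ) :
    ∑ i ∈ S, m i * δ i ^ (γ + τ) ≤ 2 ^ γ / (1 - 2⁻¹ ^ τ) * A := by
  classical
  have hA : 0 ≤ A := by
    have := (Finset.sum_nonneg fun i hi => hm i (Finset.mem_filter.mp hi).1).trans
      (hcount 2⁻¹ (by norm_num) (by norm_num))
    simpa using (le_div_iff₀ (by positivity)).mp this
  choose! κ hκ using fun i hi => exists_nat_pow_near_of_lt_one (hδ i hi).1 (hδ i hi).2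
    (by norm_num : (0 : ℝ) < 2⁻¹) (by norm_num)
  set q : ℝ := 2⁻¹ ^ τ
  have hq0 : 0 ≤ q := by positivity
  have hq1 : q < 1 := Real.rpow_lt_one (by norm_num) (by norm_num) hτ
  have hfiber : ∀ k : ℕ, ∑ i ∈ S with κ i = k, m i * δ i ^ (γ + τ) ≤ 2 ^ γ * A * q ^ k := by
    intro k
    set v : ℝ := 2⁻¹ ^ k
    have hv : 0 < v := by positivity
    calc ∑ i ∈ S with κ i = k, m i * δ i ^ (γ + τ)
        ≤ ∑ i ∈ S with κ i = k, m i * v ^ (γ + τ) := by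
          refine Finset.sum_le_sum fun i hi => ?_
          obtain ⟨hiS, rfl⟩ := Finset.mem_filter.mp hi
          exact mul_le_mul_of_nonneg_left
            (Real.rpow_le_rpow (hδ i hiS).1.le (hκ i hiS).2 hγτ) (hm i hiS)
      _ = (∑ i ∈ S with κ i = k, m i) * v ^ (γ + τ) := (Finset.sum_mul ..).symm
      _ ≤ (∑ i ∈ S with v / 2 ≤ δ i, m i) * v ^ (γ + τ) := by
          refine mul_le_mul_of_nonneg_right (Finset.sum_le_sum_of_subset_of_nonneg ?_
            fun i hi _ => hm i (Finset.mem_filter.mp hi).1) (by positivity)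
          intro i hi
          obtain ⟨hiS, rfl⟩ := Finset.mem_filter.mp hi
          refine Finset.mem_filter.mpr ⟨hiS, ?_⟩
          have := (hκ i hiS).1
          rw [pow_succ] at this
          exact (div_eq_mul_inv v 2 ▸ this).le
      _ ≤ A / (v / 2) ^ γ * v ^ (γ + τ) :=
          mul_le_mul_of_nonneg_right (hcount _ (by positivity)
            (by have : v ≤ 1 := pow_le_one₀ (by norm_num) (by norm_num); linarith))
            (by positivity)
      _ = 2 ^ γ * A * q ^ k := by
          rw [Real.div_rpow hv.le (by norm_num), Real.rpow_add hv, Real.rpow_pow_comm (by norm_num)]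
          have : 0 < v ^ γ := by positivity
          field_simp
          simp [v]
  calc ∑ i ∈ S, m i * δ i ^ (γ + τ)
      = ∑ k ∈ S.image κ, ∑ i ∈ S with κ i = k, m i * δ i ^ (γ + τ) :=
        (Finset.sum_fiberwise_of_maps_to (fun i hi => Finset.mem_image_of_mem κ hi) _).symm
    _ ≤ ∑ k ∈ S.image κ, 2 ^ γ * A * q ^ k := Finset.sum_le_sum fun k _ => hfiber k
    _ = 2 ^ γ * A * ∑ k ∈ S.image κ, q ^ k := (Finset.mul_sum ..).symm
    _ ≤ 2 ^ γ * A * (1 - q)⁻¹ :=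
        mul_le_mul_of_nonneg_left (Finset.sum_pow_le_inv_one_sub hq0 hq1 _) (by positivity)
    _ = 2 ^ γ / (1 - q) * A := by ring

/-- If `h` is holomorphic in the unit disc, `h 0 = 1`, and
`log |h(w)| ≤ C₀ / (1-|w|)^α`, then the zeros of `h` (counted with multiplicity,
i.e. order of vanishing `m w`) satisfy `∑ (1-|w|)^(α+τ+1) ≤ C(α,τ) · C₀`. -/
theorem zero_sum_est_simple (α : ℝ) (hα : 0 < α) (τ : ℝ) (hτ : 0 < τ) :
    ∃ C : ℝ, 0 < C ∧
      ∀ (C₀ : ℝ), 0 ≤ C₀ →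
      ∀ (h : ℂ → ℂ), DifferentiableOn ℂ h (ball (0 : ℂ) 1) → h 0 = 1 →
      (∀ w ∈ ball (0 : ℂ) 1, Real.log ‖h w‖ ≤ C₀ / (1 - ‖w‖) ^ α) →
      ∀ (S : Finset ℂ) (m : ℂ → ℕ),
        (∀ w ∈ S, w ∈ ball (0 : ℂ) 1 ∧ h w = 0 ∧
          ∃ g : ℂ → ℂ, AnalyticAt ℂ g w ∧ g w ≠ 0 ∧
            ∀ᶠ z in nhds w, h z = (z - w) ^ (m w) * g z) →
        ∑ w ∈ S, (m w : ℝ) * (1 - ‖w‖) ^ (α + τ + 1) ≤ C * C₀ := by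
  have hq : (2⁻¹ : ℝ) ^ τ < 1 := Real.rpow_lt_one (by norm_num) (by norm_num) hτ
  refine ⟨2 ^ (α + 1) / (1 - 2⁻¹ ^ τ) * 2 ^ (α + 1),
    mul_pos (div_pos (by positivity) (sub_pos.mpr hq)) (by positivity), ?_⟩
  intro C₀ hC₀ h hh h0 hgrowth S m hS
  have hball : ∀ w ∈ S, ‖w‖ < 1 := fun w hw => by simpa using (hS w hw).1
  have horder : ∀ w ∈ S, analyticOrderAt h w = m w := by
    intro w hw
    obtain ⟨hw1, -, g, hg, hgw, hfac⟩ := hS w hw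
    exact ((hh.analyticOnNhd isOpen_ball) w hw1).analyticOrderAt_eq_natCast.mpr
      ⟨g, hg, hgw, by simpa using hfac⟩
  have hlayers := S.sum_mul_rpow_le_of_sum_filter_le (m := fun w => (m w : ℝ))
    (δ := fun w => 1 - ‖w‖) (γ := α + 1) (fun w _ => Nat.cast_nonneg _)
    (fun w hw => ⟨by linarith [hball w hw], by linarith [norm_nonneg w]⟩) (by linarith) hτ
    fun t ht0 ht1 => sum_analyticOrderAt_le_of_log_norm_le hC₀ hh h0 hgrowth S horder ht0 ht1
  simpa [add_right_comm, mul_assoc] using hlayers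
end

section
/- Let w ∈ 𝔻 \ {0} and set z := w + w⁻¹. Then (1/2)·|w²−1|·(1−|w|)/|w| ≤ dist(z, [−2, 2]) ≤ ((1+√2)/2)·|w²−1|·(1−|w|)/|w|. -/
/-!
Every point of `[-2, 2]` is `t + t⁻¹` for some `t` on the unit circle, and
`w + w⁻¹ - (t + t⁻¹) = (w - t)(wt - 1)/(wt)`. For the lower bound take `t` in the closed half-plane
opposite to `w`: then `|w - t| ≥ min(|w - 1|, |w + 1|) ≥ |w² - 1|/2` and `|wt - 1| ≥ 1 - |w|`.
For the upper bound take `t = w/|w|`: then `|w - t| = 1 - |w|`, and with `s = w²/|w|` one has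
`|s - 1| ≤ (1 + √2)/2 · ||w| s - 1|`, the constant being sharp at `s = -(√2 - 1)`.
-/

open Complex Metric Set

lemma one_add_le_mul_one_add_sq (r : ℝ) : 1 + r ≤ (1 + √2) / 2 * (1 + r ^ 2) := by
  have h2 := Real.sq_sqrt (show (0 : ℝ) ≤ 2 by norm_num)
  have hsq : (1 + √2) / 2 * (1 + r ^ 2) - (1 + r) = (1 + √2) / 2 * (r - (√2 - 1)) ^ 2 := by
    linear_combination (r - (√2 - 1) / 2) * h2
  have : 0 ≤ (1 + √2) / 2 * (r - (√2 - 1)) ^ 2 := by positivity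
  linarith

lemma add_inv_sub_add_inv {K : Type*} [Field K] {w t : K} (hw : w ≠ 0) (ht : t ≠ 0) :
    w + w⁻¹ - (t + t⁻¹) = (w - t) * (w * t - 1) / (w * t) := by
  field_simp
  ring

namespace Complex

lemma norm_add_inv_sub_add_inv {w t : ℂ} (hw : w ≠ 0) (ht : ‖t‖ = 1) :
    ‖w + w⁻¹ - (t + t⁻¹)‖ = ‖w - t‖ * ‖w * t - 1‖ / ‖w‖ := by
  have ht0 : t ≠ 0 := norm_ne_zero_iff.mp (by simp [ht])
  rw [add_inv_sub_add_inv hw ht0, norm_div, norm_mul, norm_mul, ht, mul_one]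

lemma add_inv_eq_two_mul_re {t : ℂ} (ht : ‖t‖ = 1) : t + t⁻¹ = ((2 * t.re : ℝ) : ℂ) := by
  rw [inv_eq_conj ht, add_conj]

lemma add_inv_mem_ofReal_Icc {t : ℂ} (ht : ‖t‖ = 1) :
    t + t⁻¹ ∈ ((↑) : ℝ → ℂ) '' Icc (-2) 2 := by
  have hre := abs_le.mp ((abs_re_le_norm t).trans_eq ht)
  exact ⟨2 * t.re, ⟨by linarith, by linarith⟩, (add_inv_eq_two_mul_re ht).symm⟩

lemma exists_norm_eq_one_add_inv_eq {x : ℝ} (hx : x ∈ Icc (-2) 2) (s : ℝ) :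
    ∃ t : ℂ, ‖t‖ = 1 ∧ t + t⁻¹ = x ∧ s * t.im ≤ 0 := by
  have hcircle : ∀ e : ℝ, e ^ 2 = 1 - (x / 2) ^ 2 →
      ‖(⟨x / 2, e⟩ : ℂ)‖ = 1 ∧ (⟨x / 2, e⟩ : ℂ) + (⟨x / 2, e⟩ : ℂ)⁻¹ = x := by
    intro e he
    have hnorm : ‖(⟨x / 2, e⟩ : ℂ)‖ = 1 := by
      rw [norm_def, normSq_mk, ← sq, ← sq, he]
      simp
    refine ⟨hnorm, ?_⟩
    rw [add_inv_eq_two_mul_re hnorm, mul_div_cancel₀ x two_ne_zero]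
  have hd := Real.sq_sqrt (show 0 ≤ 1 - (x / 2) ^ 2 by nlinarith [hx.1, hx.2])
  rcases le_total 0 s with hs | hs
  · obtain ⟨h1, h2⟩ := hcircle (-√(1 - (x / 2) ^ 2)) (by rw [neg_sq, hd])
    exact ⟨_, h1, h2, by nlinarith [Real.sqrt_nonneg (1 - (x / 2) ^ 2)]⟩
  · obtain ⟨h1, h2⟩ := hcircle (√(1 - (x / 2) ^ 2)) hd
    exact ⟨_, h1, h2, by nlinarith [Real.sqrt_nonneg (1 - (x / 2) ^ 2)]⟩

lemma min_norm_sub_one_norm_add_one_le {w t : ℂ} (ht : ‖t‖ = 1) (him : w.im * t.im ≤ 0) :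
    min ‖w - 1‖ ‖w + 1‖ ≤ ‖w - t‖ := by
  have hre := abs_le.mp ((abs_re_le_norm t).trans_eq ht)
  have hnormSq : t.re * t.re + t.im * t.im = 1 := by
    rw [← normSq_apply, ← Complex.sq_norm, ht, one_pow]
  rcases le_total 0 w.re with hw | hw
  · refine min_le_left _ _ |>.trans ((sq_le_sq₀ (norm_nonneg _) (norm_nonneg _)).mp ?_)
    simp only [Complex.sq_norm, normSq_apply, sub_re, sub_im, one_re, one_im]
    nlinarith
  · refine min_le_right _ _ |>.trans ((sq_le_sq₀ (norm_nonneg _) (norm_nonneg _)).mp ?_)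
    simp only [Complex.sq_norm, normSq_apply, add_re, add_im, sub_re, sub_im, one_re, one_im]
    nlinarith

lemma norm_sq_sub_one_le_two_mul_norm_sub {w t : ℂ} (hw : ‖w‖ ≤ 1) (ht : ‖t‖ = 1)
    (him : w.im * t.im ≤ 0) : ‖w ^ 2 - 1‖ ≤ 2 * ‖w - t‖ := by
  have hsub : ‖w - 1‖ ≤ 2 := (norm_sub_le _ _).trans (by rw [norm_one]; linarith)
  have hadd : ‖w + 1‖ ≤ 2 := (norm_add_le _ _).trans (by rw [norm_one]; linarith)
  have hmin := min_norm_sub_one_norm_add_one_le ht him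
  have hfactor : ‖w ^ 2 - 1‖ = ‖w - 1‖ * ‖w + 1‖ := by rw [← norm_mul]; ring_nf
  rw [hfactor]
  rcases le_total ‖w - 1‖ ‖w + 1‖ with h | h
  · rw [min_eq_left h] at hmin
    nlinarith [norm_nonneg (w - 1)]
  · rw [min_eq_right h] at hmin
    nlinarith [norm_nonneg (w + 1)]

lemma norm_sub_one_le_mul_norm_ofReal_mul_sub_one {s : ℂ} {r : ℝ} (hs : ‖s‖ = r) :
    ‖s - 1‖ ≤ (1 + √2) / 2 * ‖r * s - 1‖ := by
  set K := (1 + √2) / 2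
  have hK : 1 ≤ K := by have := Real.one_lt_sqrt_two; unfold K; linarith
  have hr : 0 ≤ r := hs ▸ norm_nonneg s
  have hre := abs_le.mp ((abs_re_le_norm s).trans_eq hs)
  have hnormSq : s.re * s.re + s.im * s.im = r ^ 2 := by rw [← normSq_apply, ← Complex.sq_norm, hs]
  have hminus : (1 + r) ^ 2 ≤ K ^ 2 * (1 + r ^ 2) ^ 2 := by
    rw [← mul_pow]; exact pow_le_pow_left₀ (by linarith) (one_add_le_mul_one_add_sq r) 2
  have hplus : 1 ≤ K ^ 2 * (1 + r) ^ 2 := by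
    rw [← mul_pow]; exact one_le_pow₀ (by nlinarith)
  rw [← sq_le_sq₀ (norm_nonneg _) (by positivity), mul_pow]
  simp only [Complex.sq_norm, normSq_apply, sub_re, sub_im, one_re, one_im, re_ofReal_mul,
    im_ofReal_mul]
  -- Both sides are affine in `s.re ∈ [-r, r]`, so the endpoints `s = ±r` suffice.
  rcases le_total (K ^ 2 * r) 1 with hslope | hslope
  · nlinarith
  · nlinarith [mul_nonneg (sq_nonneg (1 - r)) (sub_nonneg.mpr hplus)]

lemma half_mul_le_norm_add_inv_sub_ofReal {w : ℂ} (hw0 : w ≠ 0) (hw : ‖w‖ ≤ 1) {x : ℝ}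
    (hx : x ∈ Icc (-2) 2) : 1 / 2 * (‖w ^ 2 - 1‖ * (1 - ‖w‖) / ‖w‖) ≤ ‖w + w⁻¹ - x‖ := by
  obtain ⟨t, ht, hxt, him⟩ := exists_norm_eq_one_add_inv_eq hx w.im
  have hfar := norm_sq_sub_one_le_two_mul_norm_sub hw ht him
  have hfar' : 1 - ‖w‖ ≤ ‖w * t - 1‖ := by
    simpa [norm_sub_rev, ht] using norm_sub_norm_le 1 (w * t)
  calc 1 / 2 * (‖w ^ 2 - 1‖ * (1 - ‖w‖) / ‖w‖) = ‖w ^ 2 - 1‖ / 2 * (1 - ‖w‖) / ‖w‖ := by ring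
    _ ≤ ‖w - t‖ * ‖w * t - 1‖ / ‖w‖ := by gcongr; linarith
    _ = ‖w + w⁻¹ - x‖ := by rw [← hxt, norm_add_inv_sub_add_inv hw0 ht]

lemma norm_add_inv_sub_add_inv_div_norm_le {w : ℂ} (hw0 : w ≠ 0) (hw : ‖w‖ ≤ 1) :
    ‖w + w⁻¹ - (w / ‖w‖ + (w / ‖w‖)⁻¹)‖ ≤ (1 + √2) / 2 * (‖w ^ 2 - 1‖ * (1 - ‖w‖) / ‖w‖) := by
  have hr0 : 0 < ‖w‖ := norm_pos_iff.mpr hw0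
  set u := w / ‖w‖
  have hu : ‖u‖ = 1 := by simp [u, hr0.ne']
  have hwu : w = ‖w‖ * u := by simp [u, mul_div_cancel₀ _ (ofReal_ne_zero.mpr hr0.ne')]
  have hnear : ‖w - u‖ = 1 - ‖w‖ := by
    rw [show w - u = ((‖w‖ - 1 : ℝ) : ℂ) * u by push_cast; nth_rw 1 [hwu]; ring, norm_mul, hu,
      norm_real, Real.norm_eq_abs, abs_of_nonpos (by linarith)]
    ring
  have hcmp : ‖w * u - 1‖ ≤ (1 + √2) / 2 * ‖w ^ 2 - 1‖ := by
    have := norm_sub_one_le_mul_norm_ofReal_mul_sub_one (s := w * u) (r := ‖w‖)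
      (by rw [norm_mul, hu, mul_one])
    rwa [mul_left_comm, ← hwu, ← sq] at this
  calc ‖w + w⁻¹ - (u + u⁻¹)‖ = (1 - ‖w‖) * ‖w * u - 1‖ / ‖w‖ := by
        rw [norm_add_inv_sub_add_inv hw0 hu, hnear]
    _ ≤ (1 - ‖w‖) * ((1 + √2) / 2 * ‖w ^ 2 - 1‖) / ‖w‖ := by gcongr
    _ = (1 + √2) / 2 * (‖w ^ 2 - 1‖ * (1 - ‖w‖) / ‖w‖) := by ring

end Complex

/-- For `w ∈ 𝔻 \ {0}` and `z = w + w⁻¹`, the distance from `z` to `[-2,2]` is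
comparable to `|w²-1|(1-|w|)/|w|`. -/
theorem dist_to_interval_est (w : ℂ) (hw : w ∈ ball (0 : ℂ) 1) (hw0 : w ≠ 0) :
    (1 / 2) * (‖w ^ 2 - 1‖ * (1 - ‖w‖) / ‖w‖) ≤
      Metric.infDist (w + w⁻¹) ((fun x : ℝ => (x : ℂ)) '' Set.Icc (-2 : ℝ) 2) ∧
    Metric.infDist (w + w⁻¹) ((fun x : ℝ => (x : ℂ)) '' Set.Icc (-2 : ℝ) 2) ≤
      ((1 + Real.sqrt 2) / 2) *
        (‖w ^ 2 - 1‖ * (1 - ‖w‖) / ‖w‖) := by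
  have hr1 : ‖w‖ ≤ 1 := (mem_ball_zero_iff.mp hw).le
  have hu : ‖w / ‖w‖‖ = 1 := by simp [norm_ne_zero_iff.mpr hw0]
  constructor
  · rw [le_infDist ⟨_, add_inv_mem_ofReal_Icc norm_one⟩]
    rintro _ ⟨x, hx, rfl⟩
    rw [dist_eq]
    exact half_mul_le_norm_add_inv_sub_ofReal hw0 hr1 hx
  · calc infDist (w + w⁻¹) _ ≤ dist (w + w⁻¹) (w / ‖w‖ + (w / ‖w‖)⁻¹) :=
          infDist_le_dist_of_mem (add_inv_mem_ofReal_Icc hu)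
      _ ≤ _ := by rw [dist_eq]; exact norm_add_inv_sub_add_inv_div_norm_le hw0 hr1
end

section
/- Let a, b ∈ ℝ with a < b, let φ(w) := ((b−a)/4)·(w + w⁻¹ + 2) + a, and let w ∈ 𝔻 \ {0}. Then ((b−a)/8)·|w²−1|·(1−|w|)/|w| ≤ dist(φ(w), [a, b]) ≤ ((b−a)(1+√2)/8)·|w²−1|·(1−|w|)/|w|. -/
/-!
Writing a point of `[a, b]` as `x = (a + b)/2 + (b - a)/2 · t` with `t ∈ [-1, 1]`, one has
`φ(w) - x = ((b - a)/4) (w² - 2tw + 1)/w`, and `w² - 2tw + 1 = (w - u)(w - ū)` for the point `u`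
of the unit circle with `Re u = t`. Both factors are at least `1 - |w|`, while
`2(w² - 1) = (w - u)(w + ū) + (w - ū)(w + u)` bounds `|w² - 1|` by their sum: this gives the
lower bound. For the upper bound take `u = w/|w|`: then `w² - 2tw + 1 = (|w| - 1)(|w|u² - 1)`
and `w² - 1 = |w|²u² - 1`, so it remains to compare `|rz - 1|` with `|r²z - 1|` on the unit
circle, a quadratic inequality in `r` whose sharp constant is `(1 + √2)/2`.
-/

open Complex ComplexConjugate Metric Set

lemma sq_sub_two_re_mul_add_one_eq {u : ℂ} (hu : ‖u‖ = 1) (w : ℂ) :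
    w ^ 2 - 2 * u.re * w + 1 = (w - u) * (w - conj u) := by
  have hprod : u * conj u = 1 := by rw [mul_conj', hu]; norm_num
  have hsum : u + conj u = 2 * u.re := by rw [add_conj]; push_cast; ring
  linear_combination w * hsum - hprod

lemma one_sub_norm_mul_norm_sq_sub_one_le {u w : ℂ} (hu : ‖u‖ = 1) (hw : ‖w‖ ≤ 1) :
    (1 - ‖w‖) * ‖w ^ 2 - 1‖ ≤ 2 * ‖w ^ 2 - 2 * u.re * w + 1‖ := by
  have hu' : ‖conj u‖ = 1 := by rwa [norm_conj]
  have hprod : u * conj u = 1 := by rw [mul_conj', hu]; norm_num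
  have hdist_u : 1 - ‖w‖ ≤ ‖w - u‖ := by
    simpa [hu, norm_sub_rev] using norm_sub_norm_le u w
  have hdist_conj : 1 - ‖w‖ ≤ ‖w - conj u‖ := by
    simpa [hu, norm_sub_rev] using norm_sub_norm_le (conj u) w
  have hsplit : 2 * (w ^ 2 - 1) = (w - u) * (w + conj u) + (w - conj u) * (w + u) := by
    linear_combination 2 * hprod
  have hsum : ‖w ^ 2 - 1‖ ≤ ‖w - u‖ + ‖w - conj u‖ := by
    have h₁ : ‖w + conj u‖ ≤ 2 := (norm_add_le _ _).trans (by linarith)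
    have h₂ : ‖w + u‖ ≤ 2 := (norm_add_le _ _).trans (by linarith)
    have := norm_add_le ((w - u) * (w + conj u)) ((w - conj u) * (w + u))
    rw [← hsplit, norm_mul, norm_mul, norm_mul, Complex.norm_two] at this
    nlinarith [norm_nonneg (w - u), norm_nonneg (w - conj u)]
  rw [sq_sub_two_re_mul_add_one_eq hu, norm_mul]
  nlinarith [norm_nonneg (w - u), norm_nonneg (w - conj u)]

lemma exists_norm_eq_one_re_eq {t : ℝ} (ht : t ∈ Icc (-1) 1) : ∃ u : ℂ, ‖u‖ = 1 ∧ u.re = t :=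
  ⟨exp (Real.arccos t * I), norm_exp_ofReal_mul_I _, by
    rw [exp_ofReal_mul_I_re, Real.cos_arccos ht.1 ht.2]⟩

/-- Both sides are affine in `m`, so it suffices to take `m = ±1`; for `m = -1` equality holds
at `r = √2 - 1`. -/
lemma four_mul_sq_sub_two_mul_add_one_le {r m : ℝ} (hr : 0 ≤ r) (hm : |m| ≤ 1) :
    4 * (r ^ 2 - 2 * r * m + 1) ≤ (1 + √2) ^ 2 * ((r ^ 2) ^ 2 - 2 * r ^ 2 * m + 1) := by
  have hs : √2 ^ 2 = 2 := Real.sq_sqrt (by norm_num)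
  have hs1 : 1 ≤ √2 := Real.one_le_sqrt.mpr (by norm_num)
  obtain ⟨hm₁, hm₂⟩ := abs_le.mp hm
  have hplus : 0 ≤ ((1 + √2) * (1 + r)) ^ 2 - 4 := by
    have : 2 ≤ (1 + √2) * (1 + r) := by nlinarith
    nlinarith
  have hminus : 0 ≤ (1 + √2) * (1 + r ^ 2) - 2 * (1 + r) := by
    have : (1 + √2) * (1 + r ^ 2) - 2 * (1 + r) = (1 + √2) * (r - (√2 - 1)) ^ 2 := by
      linear_combination (2 * r - (√2 - 1)) * hs
    rw [this]; positivity
  nlinarith [mul_nonneg (by linarith : 0 ≤ 1 + m) (mul_nonneg (sq_nonneg (1 - r)) hplus),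
    mul_nonneg (by linarith : 0 ≤ 1 - m)
      (mul_nonneg hminus (by linarith : 0 ≤ (1 + √2) * (1 + r ^ 2) + 2 * (1 + r)))]

lemma norm_ofReal_mul_sub_one_le {r : ℝ} (hr : 0 ≤ r) {z : ℂ} (hz : ‖z‖ = 1) :
    ‖(r : ℂ) * z - 1‖ ≤ (1 + √2) / 2 * ‖(r : ℂ) ^ 2 * z - 1‖ := by
  have hz2 : z.re ^ 2 + z.im ^ 2 = 1 := by
    have := Complex.sq_norm z
    rw [hz, normSq_apply] at this
    linarith
  have hsq (c : ℝ) : ‖(c : ℂ) * z - 1‖ ^ 2 = c ^ 2 - 2 * c * z.re + 1 := by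
    rw [Complex.sq_norm, normSq_apply]
    simp only [sub_re, mul_re, ofReal_re, ofReal_im, zero_mul, sub_zero, one_re, sub_im, mul_im,
      add_zero, one_im]
    linear_combination c ^ 2 * hz2
  have hpoly := four_mul_sq_sub_two_mul_add_one_le hr ((abs_re_le_norm z).trans hz.le)
  refine le_of_pow_le_pow_left₀ two_ne_zero (by positivity) ?_
  rw [mul_pow, hsq, ← ofReal_pow, hsq]
  linarith

lemma norm_sq_sub_two_re_div_norm_mul_add_one_le {w : ℂ} (hw0 : w ≠ 0) (hw : ‖w‖ ≤ 1) :
    ‖w ^ 2 - 2 * (w / ‖w‖).re * w + 1‖ ≤ (1 + √2) / 2 * ((1 - ‖w‖) * ‖w ^ 2 - 1‖) := by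
  set r := ‖w‖
  set u := w / r
  have hr : 0 < r := norm_pos_iff.mpr hw0
  have hu : ‖u‖ = 1 := by simp [u, r, hr.ne']
  have hwu : w = r * u := by rw [mul_div_cancel₀ _ (ofReal_ne_zero.mpr hr.ne')]
  have hprod : u * conj u = 1 := by rw [mul_conj', hu]; norm_num
  have hfactor : w ^ 2 - 2 * u.re * w + 1 = (r - 1) * (r * u ^ 2 - 1) := by
    rw [sq_sub_two_re_mul_add_one_eq hu, hwu]
    linear_combination (1 - (r : ℂ)) * hprod
  have hsq : w ^ 2 - 1 = r ^ 2 * u ^ 2 - 1 := by rw [hwu]; ring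
  have hr1 : ‖(r : ℂ) - 1‖ = 1 - r := by
    rw [← ofReal_one, ← ofReal_sub, norm_real, Real.norm_of_nonpos (by linarith)]; ring
  rw [hfactor, hsq, norm_mul, hr1]
  have := norm_ofReal_mul_sub_one_le hr.le (z := u ^ 2) (by simp [hu])
  calc (1 - r) * ‖(r : ℂ) * u ^ 2 - 1‖
      ≤ (1 - r) * ((1 + √2) / 2 * ‖(r : ℂ) ^ 2 * u ^ 2 - 1‖) := by gcongr
    _ = _ := by ring

lemma dist_joukowsky_affine_eq {w : ℂ} (hw0 : w ≠ 0) (a b t : ℝ) :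
    dist (((b : ℂ) - a) / 4 * (w + w⁻¹ + 2) + a) (((b - a) / 2 * t + (a + b) / 2 : ℝ) : ℂ) =
      |b - a| / 4 * ‖w ^ 2 - 2 * t * w + 1‖ / ‖w‖ := by
  have h : ((b : ℂ) - a) / 4 * (w + w⁻¹ + 2) + a - (((b - a) / 2 * t + (a + b) / 2 : ℝ) : ℂ) =
      ((b - a : ℝ) : ℂ) / 4 * (w ^ 2 - 2 * t * w + 1) / w := by
    push_cast; field_simp; ring
  rw [dist_eq, h, norm_div, norm_mul, norm_div, norm_real, Real.norm_eq_abs]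
  norm_num

lemma image_ofReal_Icc_eq_image_affine {a b : ℝ} (hab : a < b) :
    (fun x : ℝ => (x : ℂ)) '' Icc a b =
      (fun t : ℝ => (((b - a) / 2 * t + (a + b) / 2 : ℝ) : ℂ)) '' Icc (-1) 1 := by
  rw [← image_image (fun x : ℝ => (x : ℂ)) (fun t => (b - a) / 2 * t + (a + b) / 2),
    image_affine_Icc' (by linarith)]
  congr 2 <;> ring

/-- For `w ∈ 𝔻 \ {0}` and `φ(w) = ((b-a)/4)(w + w⁻¹ + 2) + a`, the distance from
`φ(w)` to `[a,b]` is comparable to `((b-a)/8)·|w²-1|(1-|w|)/|w|`. -/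
theorem dist_to_interval_est_general (a b : ℝ) (hab : a < b)
    (w : ℂ) (hw : w ∈ ball (0 : ℂ) 1) (hw0 : w ≠ 0) :
    ((b - a) / 8) * (‖w ^ 2 - 1‖ * (1 - ‖w‖) / ‖w‖) ≤
      Metric.infDist (((b : ℂ) - a) / 4 * (w + w⁻¹ + 2) + a)
        ((fun x : ℝ => (x : ℂ)) '' Set.Icc a b) ∧
    Metric.infDist (((b : ℂ) - a) / 4 * (w + w⁻¹ + 2) + a)
        ((fun x : ℝ => (x : ℂ)) '' Set.Icc a b) ≤
      ((b - a) * (1 + Real.sqrt 2) / 8) *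
        (‖w ^ 2 - 1‖ * (1 - ‖w‖) / ‖w‖) := by
  have hw1 : ‖w‖ ≤ 1 := (mem_ball_zero_iff.mp hw).le
  have hba : |b - a| = b - a := abs_of_pos (sub_pos.mpr hab)
  rw [image_ofReal_Icc_eq_image_affine hab]
  constructor
  · rw [le_infDist ((nonempty_Icc.mpr (by norm_num)).image _)]
    rintro _ ⟨t, ht, rfl⟩
    obtain ⟨u, hu, rfl⟩ := exists_norm_eq_one_re_eq ht
    rw [dist_joukowsky_affine_eq hw0, hba]
    have := one_sub_norm_mul_norm_sq_sub_one_le hu hw1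
    calc (b - a) / 8 * (‖w ^ 2 - 1‖ * (1 - ‖w‖) / ‖w‖)
        = (b - a) / 8 * ((1 - ‖w‖) * ‖w ^ 2 - 1‖) / ‖w‖ := by ring
      _ ≤ (b - a) / 8 * (2 * ‖w ^ 2 - 2 * u.re * w + 1‖) / ‖w‖ := by gcongr
      _ = _ := by ring
  · have hre : (w / ‖w‖).re ∈ Icc (-1) 1 :=
      abs_le.mp ((abs_re_le_norm _).trans (by simp [norm_ne_zero_iff.mpr hw0]))
    refine (infDist_le_dist_of_mem (mem_image_of_mem _ hre)).trans ?_
    rw [dist_joukowsky_affine_eq hw0, hba]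
    have := norm_sq_sub_two_re_div_norm_mul_add_one_le hw0 hw1
    calc (b - a) / 4 * ‖w ^ 2 - 2 * (w / ‖w‖).re * w + 1‖ / ‖w‖
        ≤ (b - a) / 4 * ((1 + √2) / 2 * ((1 - ‖w‖) * ‖w ^ 2 - 1‖)) / ‖w‖ := by gcongr
      _ = _ := by ring
end

section
/- Let 1 ≤ p ≤ ∞, let w ∈ 𝔻 \ {0} and set z := w + w⁻¹. Define b_k := w^{|k|}/(w⁻¹ − w) for k ∈ ℤ. Then the operator B on ℓ^p(ℤ, ℂ) given by (Bf)(n) := ∑_{k∈ℤ} b_{n−k} f(k) is a well-defined bounded linear operator with ‖B‖ ≤ ∑_{k∈ℤ} |b_k| = (1/|w⁻¹ − w|)·(1+|w|)/(1−|w|), and B satisfies B(z·𝟙 − Δ_p) = (z·𝟙 − Δ_p)B = 𝟙; in particular z·𝟙 − Δ_p is invertible and B = (z·𝟙 − Δ_p)⁻¹. -/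
/-!
With `S_k` the shift `(S_k f)(n) = f(n - k)`, an isometry of `ℓ^p`, the operator is
`B = ∑_k b_k S_k`, a series converging absolutely in operator norm since `∑ |b_k| < ∞`; this gives
the norm bound and the convolution formula at once. As `Δ = S_1 + S_{-1}` and
`S_a S_b = S_{a+b}`, the product `(z - Δ) B` is again such a series, with coefficients
`z b_k - b_{k-1} - b_{k+1} = δ_{k,0}`: away from `0` because `w` and `w⁻¹` are the roots of
`x² - z x + 1`, at `0` thanks to the normalisation by `w⁻¹ - w`. Finally `B` commutes with every
shift, hence with `z - Δ`.
-/

open ENNReal Metric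

namespace lp

section Reindex

variable {ι ι' 𝕜 E : Type*} [NormedAddCommGroup E] {p : ℝ≥0∞}

theorem _root_.Memℓp.comp_equiv {f : ι → E} (hf : Memℓp f p) (e : ι' ≃ ι) :
    Memℓp (f ∘ e) p := by
  rcases p.trichotomy with rfl | rfl | hp
  · exact memℓp_zero (hf.finite_dsupport.preimage e.injective.injOn)
  · exact memℓp_infty ((e.surjective.range_comp fun i => ‖f i‖) ▸ hf.bddAbove)
  · exact memℓp_gen ((e.summable_iff (f := fun i => ‖f i‖ ^ p.toReal)).2 (hf.summable hp))

theorem norm_comp_equiv [Fact (1 ≤ p)] (e : ι' ≃ ι) (f : lp (fun _ : ι => E) p)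
    (g : lp (fun _ : ι' => E) p) (hg : ⇑g = f ∘ e) : ‖g‖ = ‖f‖ := by
  rcases eq_or_ne p ∞ with rfl | hp
  · rw [lp.norm_eq_ciSup, lp.norm_eq_ciSup, iSup, iSup, hg]
    exact congrArg sSup (e.surjective.range_comp fun i => ‖f i‖)
  · have hp : 0 < p.toReal := ENNReal.toReal_pos (zero_lt_one.trans_le Fact.out).ne' hp
    rw [lp.norm_eq_tsum_rpow hp, lp.norm_eq_tsum_rpow hp, hg]
    exact congrArg (· ^ (1 / p.toReal)) (e.tsum_eq fun i => ‖f i‖ ^ p.toReal)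

variable [NormedRing 𝕜] [Module 𝕜 E] [IsBoundedSMul 𝕜 E] [Fact (1 ≤ p)]

variable (𝕜 E p) in
noncomputable def reindex (e : ι' ≃ ι) : lp (fun _ : ι => E) p →ₗᵢ[𝕜] lp (fun _ : ι' => E) p where
  toFun f := ⟨f ∘ e, (lp.memℓp f).comp_equiv e⟩
  map_add' _ _ := rfl
  map_smul' _ _ := rfl
  norm_map' f := norm_comp_equiv e f _ rfl

@[simp]
theorem reindex_apply (e : ι' ≃ ι) (f : lp (fun _ : ι => E) p) (i : ι') :
    reindex 𝕜 E p e f i = f (e i) := rfl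

end Reindex

section Convolution

variable {G 𝕜 E : Type*} [AddCommGroup G] [NontriviallyNormedField 𝕜] [NormedAddCommGroup E]
  [NormedSpace 𝕜 E] {p : ℝ≥0∞} [Fact (1 ≤ p)]

local notation "ℓᵖ" => lp (fun _ : G => E) p

noncomputable def shift (g : G) : ℓᵖ →L[𝕜] ℓᵖ :=
  (reindex 𝕜 E p (Equiv.subRight g)).toContinuousLinearMap

@[simp]
theorem shift_apply (g : G) (f : ℓᵖ) (n : G) : shift (𝕜 := 𝕜) g f n = f (n - g) := rfl

theorem norm_shift_le (g : G) : ‖(shift g : ℓᵖ →L[𝕜] ℓᵖ)‖ ≤ 1 :=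
  LinearIsometry.norm_toContinuousLinearMap_le _

theorem norm_smul_shift_le (a : 𝕜) (g : G) : ‖a • (shift g : ℓᵖ →L[𝕜] ℓᵖ)‖ ≤ ‖a‖ :=
  (ContinuousLinearMap.opNorm_smul_le _ _).trans
    (mul_le_of_le_one_right (norm_nonneg _) (norm_shift_le g))

theorem shift_comp_shift (a b : G) :
    (shift a : ℓᵖ →L[𝕜] ℓᵖ).comp (shift b) = shift (a + b) := by
  ext f n
  simp [sub_sub]

theorem shift_zero : (shift 0 : ℓᵖ →L[𝕜] ℓᵖ) = ContinuousLinearMap.id 𝕜 ℓᵖ := by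
  ext f n
  simp

noncomputable def convolutionOp (c : G → 𝕜) : ℓᵖ →L[𝕜] ℓᵖ :=
  ∑' k, c k • shift k

variable {c : G → 𝕜}

theorem norm_convolutionOp_le (hc : Summable fun k => ‖c k‖) :
    ‖(convolutionOp c : ℓᵖ →L[𝕜] ℓᵖ)‖ ≤ ∑' k, ‖c k‖ :=
  tsum_of_norm_bounded hc.hasSum fun k => norm_smul_shift_le (c k) k

variable [CompleteSpace E]

theorem hasSum_convolutionOp (hc : Summable fun k => ‖c k‖) :
    HasSum (fun k => c k • shift k) (convolutionOp c : ℓᵖ →L[𝕜] ℓᵖ) :=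
  (hc.of_norm_bounded fun k => norm_smul_shift_le (c k) k).hasSum

theorem convolutionOp_apply (hc : Summable fun k => ‖c k‖) (f : ℓᵖ) (n : G) :
    convolutionOp c f n = ∑' k, c (n - k) • f k := by
  have h : HasSum (fun k => c k • f (n - k)) (convolutionOp c f n) :=
    (hasSum_convolutionOp hc).mapL
      ((lp.evalCLM 𝕜 (fun _ : G => E) p n).comp (ContinuousLinearMap.apply 𝕜 ℓᵖ f))
  rw [← (Equiv.subLeft n).tsum_eq, ← h.tsum_eq]
  simp

theorem hasSum_shift_comp_convolutionOp (hc : Summable fun k => ‖c k‖) (a : G) :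
    HasSum (fun k => c (k - a) • shift k) ((shift a).comp (convolutionOp c : ℓᵖ →L[𝕜] ℓᵖ)) := by
  have h := (hasSum_convolutionOp hc).mapL
    (ContinuousLinearMap.compL 𝕜 ℓᵖ ℓᵖ ℓᵖ (shift a))
  simp only [ContinuousLinearMap.compL_apply, ContinuousLinearMap.comp_smul,
    shift_comp_shift] at h
  refine (Equiv.addRight a).hasSum_iff.mp ?_
  simpa [Function.comp_def, add_comm a] using h

theorem hasSum_convolutionOp_comp_shift (hc : Summable fun k => ‖c k‖) (a : G) :
    HasSum (fun k => c (k - a) • shift k) ((convolutionOp c : ℓᵖ →L[𝕜] ℓᵖ).comp (shift a)) := by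
  have h := (hasSum_convolutionOp hc).mapL
    ((ContinuousLinearMap.compL 𝕜 ℓᵖ ℓᵖ ℓᵖ).flip (shift a))
  simp only [ContinuousLinearMap.flip_apply, ContinuousLinearMap.compL_apply,
    ContinuousLinearMap.smul_comp, shift_comp_shift] at h
  refine (Equiv.addRight a).hasSum_iff.mp ?_
  simpa [Function.comp_def] using h

theorem shift_comp_convolutionOp (hc : Summable fun k => ‖c k‖) (a : G) :
    (shift a).comp (convolutionOp c : ℓᵖ →L[𝕜] ℓᵖ) = (convolutionOp c).comp (shift a) :=
  (hasSum_shift_comp_convolutionOp hc a).unique (hasSum_convolutionOp_comp_shift hc a)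

noncomputable def discreteLaplacian (g : G) : ℓᵖ →L[𝕜] ℓᵖ :=
  shift g + shift (-g)

theorem discreteLaplacian_comp_convolutionOp (hc : Summable fun k => ‖c k‖) (g : G) :
    (discreteLaplacian g).comp (convolutionOp c : ℓᵖ →L[𝕜] ℓᵖ) =
      (convolutionOp c).comp (discreteLaplacian g) := by
  simp only [discreteLaplacian, ContinuousLinearMap.add_comp, ContinuousLinearMap.comp_add,
    shift_comp_convolutionOp hc]

theorem smul_id_sub_discreteLaplacian_comp_convolutionOp [DecidableEq G]
    (hc : Summable fun k => ‖c k‖) (g : G) (z : 𝕜)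
    (hrec : ∀ k, z * c k - c (k - g) - c (k + g) = if k = 0 then 1 else 0) :
    (z • ContinuousLinearMap.id 𝕜 ℓᵖ - discreteLaplacian g).comp (convolutionOp c : ℓᵖ →L[𝕜] ℓᵖ) =
      ContinuousLinearMap.id 𝕜 ℓᵖ := by
  have h := ((hasSum_convolutionOp (E := E) (p := p) hc).const_smul z).sub
    ((hasSum_shift_comp_convolutionOp hc g).add (hasSum_shift_comp_convolutionOp hc (-g)))
  simp only [sub_neg_eq_add, smul_smul] at h
  have hcoef (k : G) : (z * c k) • shift k - (c (k - g) • shift k + c (k + g) • shift k) =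
      if k = 0 then (shift 0 : ℓᵖ →L[𝕜] ℓᵖ) else 0 := by
    rw [← add_smul, ← sub_smul, ← sub_sub, hrec k]
    split_ifs with hk <;> simp [hk]
  rw [funext hcoef] at h
  rw [discreteLaplacian, ContinuousLinearMap.sub_comp, ContinuousLinearMap.add_comp,
    ContinuousLinearMap.smul_comp, ContinuousLinearMap.id_comp, ← shift_zero]
  exact h.unique (hasSum_ite_eq 0 _)

theorem convolutionOp_comp_smul_id_sub_discreteLaplacian [DecidableEq G]
    (hc : Summable fun k => ‖c k‖) (g : G) (z : 𝕜)
    (hrec : ∀ k, z * c k - c (k - g) - c (k + g) = if k = 0 then 1 else 0) :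
    (convolutionOp c : ℓᵖ →L[𝕜] ℓᵖ).comp (z • ContinuousLinearMap.id 𝕜 ℓᵖ - discreteLaplacian g) =
      ContinuousLinearMap.id 𝕜 ℓᵖ := by
  have hcomm :
      (z • ContinuousLinearMap.id 𝕜 ℓᵖ - discreteLaplacian g).comp (convolutionOp c : ℓᵖ →L[𝕜] ℓᵖ) =
        (convolutionOp c).comp (z • ContinuousLinearMap.id 𝕜 ℓᵖ - discreteLaplacian g) := by
    simp only [ContinuousLinearMap.sub_comp, ContinuousLinearMap.comp_sub,
      ContinuousLinearMap.smul_comp, ContinuousLinearMap.comp_smul, ContinuousLinearMap.id_comp,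
      ContinuousLinearMap.comp_id, discreteLaplacian_comp_convolutionOp hc]
  rw [← hcomm]
  exact smul_id_sub_discreteLaplacian_comp_convolutionOp hc g z hrec

end Convolution

end lp

section ResolventKernel

variable {𝕜 : Type*} [NormedField 𝕜] {w : 𝕜}

noncomputable def resolventKernel (w : 𝕜) (k : ℤ) : 𝕜 := w ^ k.natAbs / (w⁻¹ - w)

theorem hasSum_pow_natAbs {r : ℝ} (h₀ : 0 ≤ r) (h₁ : r < 1) :
    HasSum (fun k : ℤ => r ^ k.natAbs) ((1 + r) / (1 - r)) := by
  have hgeom := hasSum_geometric_of_lt_one h₀ h₁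
  have hneg : HasSum (fun n : ℕ => r ^ (-((n : ℤ) + 1)).natAbs) (r * (1 - r)⁻¹) := by
    simp only [show ∀ n : ℕ, (-((n : ℤ) + 1)).natAbs = n + 1 by omega, pow_succ']
    exact hgeom.mul_left r
  have h := hgeom.of_nat_of_neg_add_one (f := fun k : ℤ => r ^ k.natAbs) hneg
  convert h using 1
  field_simp [(sub_pos.2 h₁).ne']

theorem hasSum_norm_resolventKernel (hw : ‖w‖ < 1) :
    HasSum (fun k => ‖resolventKernel w k‖) (1 / ‖w⁻¹ - w‖ * ((1 + ‖w‖) / (1 - ‖w‖))) := by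
  simpa [resolventKernel, div_eq_inv_mul] using
    (hasSum_pow_natAbs (norm_nonneg w) hw).mul_left ‖w⁻¹ - w‖⁻¹

theorem resolventKernel_recurrence (hw : w⁻¹ ≠ w) (k : ℤ) :
    (w + w⁻¹) * resolventKernel w k - resolventKernel w (k - 1) - resolventKernel w (k + 1) =
      if k = 0 then 1 else 0 := by
  have hw₀ : w ≠ 0 := by rintro rfl; simp at hw
  have hd : w⁻¹ - w ≠ 0 := sub_ne_zero.2 hw
  have hrec_pow (m : ℕ) : (w + w⁻¹) * w ^ (m + 1) - w ^ m - w ^ (m + 2) = 0 := by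
    field_simp; ring
  simp only [resolventKernel, mul_div_assoc', div_sub_div_same]
  rcases lt_trichotomy k 0 with hk | rfl | hk
  · obtain ⟨m, h₀, h₁, h₂⟩ : ∃ m : ℕ,
        k.natAbs = m + 1 ∧ (k - 1).natAbs = m + 2 ∧ (k + 1).natAbs = m := ⟨k.natAbs - 1, by omega⟩
    rw [h₀, h₁, h₂, if_neg hk.ne, sub_right_comm, hrec_pow m, zero_div]
  · rw [if_pos rfl, div_eq_one_iff_eq hd]
    simp
  · obtain ⟨m, h₀, h₁, h₂⟩ : ∃ m : ℕ,
        k.natAbs = m + 1 ∧ (k - 1).natAbs = m ∧ (k + 1).natAbs = m + 2 := ⟨k.natAbs - 1, by omega⟩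
    rw [h₀, h₁, h₂, if_neg hk.ne', hrec_pow m, zero_div]

end ResolventKernel

/-- The resolvent of the discrete Laplacian on `ℓ^p(ℤ,ℂ)` at `z = w + w⁻¹`,
`w ∈ 𝔻 \ {0}`: the convolution operator with kernel `b_k = w^{|k|}/(w⁻¹ - w)`
is a bounded two-sided inverse of `z·𝟙 - Δ_p`, with norm at most
`∑_k |b_k| = (1/|w⁻¹-w|)·(1+|w|)/(1-|w|)`. -/
theorem resolvent_discrete_laplacian (p : ℝ≥0∞) [Fact (1 ≤ p)]
    (Δ : lp (fun _ : ℤ => ℂ) p →L[ℂ] lp (fun _ : ℤ => ℂ) p)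
    (hΔ : ∀ (f : lp (fun _ : ℤ => ℂ) p) (n : ℤ), Δ f n = f (n - 1) + f (n + 1))
    (w : ℂ) (hw : w ∈ ball (0 : ℂ) 1) (hw0 : w ≠ 0) :
    (∑' k : ℤ, ‖w ^ k.natAbs / (w⁻¹ - w)‖) =
        (1 / ‖w⁻¹ - w‖) * ((1 + ‖w‖) / (1 - ‖w‖)) ∧
    ∃ B : lp (fun _ : ℤ => ℂ) p →L[ℂ] lp (fun _ : ℤ => ℂ) p,
      (∀ (f : lp (fun _ : ℤ => ℂ) p) (n : ℤ),
        B f n = ∑' k : ℤ, (w ^ (n - k).natAbs / (w⁻¹ - w)) * f k) ∧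
      ‖B‖ ≤ ∑' k : ℤ, ‖w ^ k.natAbs / (w⁻¹ - w)‖ ∧
      B.comp ((w + w⁻¹) • ContinuousLinearMap.id ℂ (lp (fun _ : ℤ => ℂ) p) - Δ) =
        ContinuousLinearMap.id ℂ (lp (fun _ : ℤ => ℂ) p) ∧
      ((w + w⁻¹) • ContinuousLinearMap.id ℂ (lp (fun _ : ℤ => ℂ) p) - Δ).comp B =
        ContinuousLinearMap.id ℂ (lp (fun _ : ℤ => ℂ) p) := by
  have hw₁ : ‖w‖ < 1 := mem_ball_zero_iff.mp hw
  have hw_inv : w⁻¹ ≠ w := by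
    intro h
    have : 1 < ‖w⁻¹‖ := by
      rw [norm_inv]
      exact (one_lt_inv₀ (norm_pos_iff.2 hw0)).2 hw₁
    exact (h ▸ this).not_gt hw₁
  have hc := hasSum_norm_resolventKernel hw₁
  have hΔ_eq : Δ = lp.discreteLaplacian 1 := by
    ext f n
    simp [lp.discreteLaplacian, hΔ, sub_neg_eq_add]
  subst hΔ_eq
  have hrec := resolventKernel_recurrence hw_inv
  exact ⟨hc.tsum_eq, lp.convolutionOp (resolventKernel w), lp.convolutionOp_apply hc.summable,
    lp.norm_convolutionOp_le hc.summable,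
    lp.convolutionOp_comp_smul_id_sub_discreteLaplacian hc.summable 1 _ hrec,
    lp.smul_id_sub_discreteLaplacian_comp_convolutionOp hc.summable 1 _ hrec⟩
end

section
/- Let 1 ≤ p ≤ ∞, let w ∈ 𝔻 \ {0} and set z := w + w⁻¹. Then z·𝟙 − Δ_p is invertible on ℓ^p(ℤ, ℂ) and ‖(z·𝟙 − Δ_p)⁻¹‖ ≤ 2|w| / ( |w − 1|·|w + 1|·(1 − |w|) ). -/
open ENNReal Metric

/-!
With `S` the shift `f ↦ f (· + 1)` we have `Δ = S + S⁻¹` and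
`w • (z - Δ) = (1 - w S) (1 - w S⁻¹)`. Since `S` and `S⁻¹` are isometries, both factors are
inverted by Neumann series of norm at most `(1 - |w|)⁻¹`. Multiplying these two bounds is too
crude near the unit circle; instead the partial fraction identity
`(1 - w²) (1 - w S⁻¹)⁻¹ (1 - w S)⁻¹ = (1 - w S)⁻¹ + w (1 - w S⁻¹)⁻¹ S⁻¹`
gives `‖(z - Δ)⁻¹‖ ≤ |w| (1 + |w|) / (|1 - w²| (1 - |w|))`, and `1 + |w| ≤ 2`.
-/

theorem Memℓp.comp_equiv_s9 {α β E : Type*} [NormedAddCommGroup E] {p : ℝ≥0∞} {f : β → E}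
    (hf : Memℓp f p) (e : α ≃ β) : Memℓp (f ∘ e) p := by
  rcases p.trichotomy with rfl | rfl | hp
  · rw [memℓp_zero_iff] at hf ⊢
    exact hf.preimage e.injective.injOn
  · rw [memℓp_infty_iff] at hf ⊢
    rwa [show (fun i => ‖(f ∘ e) i‖) = (fun j => ‖f j‖) ∘ e from rfl, e.surjective.range_comp]
  · rw [memℓp_gen_iff hp] at hf ⊢
    exact e.summable_iff.mpr hf

namespace lp

instance nontrivial_const {α E : Type*} [NormedAddCommGroup E] [Nonempty α] [Nontrivial E]
    {p : ℝ≥0∞} : Nontrivial (lp (fun _ : α => E) p) := by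
  classical
  obtain ⟨i⟩ := ‹Nonempty α›
  obtain ⟨x, hx⟩ := exists_ne (0 : E)
  exact ⟨lp.single p i x, 0, fun h => hx (by simpa using congrArg (· i) h)⟩

variable {α β : Type*} (𝕜 E : Type*) [NormedField 𝕜] [NormedAddCommGroup E] [NormedSpace 𝕜 E]
  (p : ℝ≥0∞) [Fact (1 ≤ p)]

def funCongrLeft (e : α ≃ β) : lp (fun _ : β => E) p ≃ₗᵢ[𝕜] lp (fun _ : α => E) p where
  toFun f := ⟨f ∘ e, (lp.memℓp f).comp_equiv_s9 e⟩
  invFun f := ⟨f ∘ e.symm, (lp.memℓp f).comp_equiv_s9 e.symm⟩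
  map_add' _ _ := rfl
  map_smul' _ _ := rfl
  left_inv f := lp.ext <| funext fun j => congrArg f (e.apply_symm_apply j)
  right_inv f := lp.ext <| funext fun i => congrArg f (e.symm_apply_apply i)
  norm_map' f := by
    rcases p.trichotomy with hp | rfl | hp
    · exact absurd hp (zero_lt_one.trans_le Fact.out).ne'
    · rw [lp.norm_eq_ciSup, lp.norm_eq_ciSup]
      exact e.iSup_comp (g := fun j => ‖f j‖)
    · rw [lp.norm_eq_tsum_rpow hp, lp.norm_eq_tsum_rpow hp]
      exact congrArg (· ^ (1 / p.toReal)) (e.tsum_eq (fun j => ‖f j‖ ^ p.toReal))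

end lp

section Algebraic

variable {𝕜 A : Type*} [Field 𝕜] [Ring A] [Algebra 𝕜 A]

theorem Units.smul_joukowski_sub_add_inv_eq_mul (u : Aˣ) {w : 𝕜} (hw : w ≠ 0) :
    w • ((w + w⁻¹) • (1 : A) - (u + ↑u⁻¹)) = (1 - w • (u : A)) * (1 - w • ↑u⁻¹) := by
  simp only [mul_sub, sub_mul, one_mul, mul_one, smul_mul_smul_comm, u.mul_inv, smul_sub,
    smul_add, smul_smul, mul_add, mul_inv_cancel₀ hw]
  module

theorem Units.one_sub_sq_smul_one_eq (u : Aˣ) (w : 𝕜) :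
    (1 - w ^ 2) • (1 : A) = (1 - w • ↑u⁻¹) + w • (↑u⁻¹ * (1 - w • (u : A))) := by
  simp only [mul_sub, mul_one, mul_smul_comm, u.inv_mul, smul_sub, smul_smul]
  module

theorem Units.one_sub_sq_smul_inv_mul_inv (u : Aˣ) {w : 𝕜} {P Q : Aˣ} (hP : (P : A) = 1 - w • ↑u)
    (hQ : (Q : A) = 1 - w • ↑u⁻¹) :
    (1 - w ^ 2) • (↑Q⁻¹ * ↑P⁻¹ : A) = ↑P⁻¹ + w • (↑Q⁻¹ * ↑u⁻¹) :=
  calc (1 - w ^ 2) • (↑Q⁻¹ * ↑P⁻¹ : A) = ↑Q⁻¹ * ((1 - w ^ 2) • 1) * ↑P⁻¹ := by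
        rw [mul_smul_one, smul_mul_assoc]
    _ = ↑Q⁻¹ * (↑Q + w • (↑u⁻¹ * ↑P)) * ↑P⁻¹ := by rw [u.one_sub_sq_smul_one_eq, hP, hQ]
    _ = ↑P⁻¹ + w • (↑Q⁻¹ * ↑u⁻¹) := by
        rw [mul_add, add_mul, Q.inv_mul, one_mul, mul_smul_comm, smul_mul_assoc, ← mul_assoc,
          mul_assoc, P.mul_inv, mul_one]

end Algebraic

section Normed

variable {𝕜 A : Type*} [NormedField 𝕜] [NormedRing A] [NormedAlgebra 𝕜 A]
  [HasSummableGeomSeries A] [NormOneClass A]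

theorem Units.norm_inv_oneSub_le (t : A) (h : ‖t‖ < 1) :
    ‖(↑(Units.oneSub t h)⁻¹ : A)‖ ≤ (1 - ‖t‖)⁻¹ := by
  have := tsum_geometric_le_of_norm_lt_one t h
  rwa [norm_one, sub_self, zero_add] at this

theorem Units.exists_val_eq_joukowski_sub_add_inv (u : Aˣ) (hu : ‖(u : A)‖ ≤ 1)
    (hu' : ‖(↑u⁻¹ : A)‖ ≤ 1) {w : 𝕜} (hw0 : w ≠ 0) (hw : ‖w‖ < 1) :
    ∃ v : Aˣ, (v : A) = (w + w⁻¹) • 1 - (u + ↑u⁻¹) ∧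
      ‖(↑v⁻¹ : A)‖ ≤ ‖w‖ * (1 + ‖w‖) / (‖1 - w ^ 2‖ * (1 - ‖w‖)) := by
  have norm_smul_le_norm {a : A} (ha : ‖a‖ ≤ 1) : ‖w • a‖ ≤ ‖w‖ :=
    (norm_smul_le w a).trans (mul_le_of_le_one_right (norm_nonneg w) ha)
  set P := Units.oneSub _ ((norm_smul_le_norm hu).trans_lt hw)
  set Q := Units.oneSub _ ((norm_smul_le_norm hu').trans_lt hw)
  have norm_inv_le {t : A} (ht : ‖t‖ ≤ ‖w‖) :
      ‖(↑(Units.oneSub t (ht.trans_lt hw))⁻¹ : A)‖ ≤ (1 - ‖w‖)⁻¹ :=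
    (Units.norm_inv_oneSub_le t _).trans (by gcongr)
  refine ⟨Units.mk0 w⁻¹ (inv_ne_zero hw0) • (P * Q), ?_, ?_⟩
  · rw [Units.val_smul, Units.val_mul, Units.val_oneSub, Units.val_oneSub,
      ← u.smul_joukowski_sub_add_inv_eq_mul hw0, Units.smul_def, Units.val_mk0, smul_smul,
      inv_mul_cancel₀ hw0, one_smul]
  have norm_QP : ‖1 - w ^ 2‖ * ‖(↑Q⁻¹ * ↑P⁻¹ : A)‖ ≤ (1 + ‖w‖) / (1 - ‖w‖) :=
    calc ‖1 - w ^ 2‖ * ‖(↑Q⁻¹ * ↑P⁻¹ : A)‖ = ‖↑P⁻¹ + w • (↑Q⁻¹ * ↑u⁻¹ : A)‖ := by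
          rw [← norm_smul, u.one_sub_sq_smul_inv_mul_inv rfl rfl]
      _ ≤ ‖(↑P⁻¹ : A)‖ + ‖w‖ * (‖(↑Q⁻¹ : A)‖ * ‖(↑u⁻¹ : A)‖) := by
          grw [norm_add_le, norm_smul_le, norm_mul_le]
      _ ≤ (1 - ‖w‖)⁻¹ + ‖w‖ * ((1 - ‖w‖)⁻¹ * 1) := by
          gcongr
          exacts [norm_inv_le (norm_smul_le_norm hu), norm_inv_le (norm_smul_le_norm hu')]
      _ = (1 + ‖w‖) / (1 - ‖w‖) := by ring
  have h1w : 0 < ‖1 - w ^ 2‖ := by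
    have := norm_sub_norm_le (1 : 𝕜) (w ^ 2)
    rw [norm_one, norm_pow] at this
    nlinarith [norm_nonneg w]
  calc ‖(↑(Units.mk0 w⁻¹ (inv_ne_zero hw0) • (P * Q))⁻¹ : A)‖ = ‖w‖ * ‖(↑Q⁻¹ * ↑P⁻¹ : A)‖ := by
        simp only [smul_inv, mul_inv_rev, val_smul, val_mul, smul_def, val_inv_eq_inv_val,
          val_mk0, inv_inv, norm_smul]
    _ ≤ ‖w‖ * ((1 + ‖w‖) / (1 - ‖w‖) / ‖1 - w ^ 2‖) := by
        gcongr
        rwa [le_div_iff₀ h1w, mul_comm]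
    _ = ‖w‖ * (1 + ‖w‖) / (‖1 - w ^ 2‖ * (1 - ‖w‖)) := by
        field_simp

end Normed

/-- For `w ∈ 𝔻 \ {0}` and `z = w + w⁻¹`, the operator `z·𝟙 - Δ_p` on
`ℓ^p(ℤ,ℂ)` is invertible with `‖(z·𝟙 - Δ_p)⁻¹‖ ≤ 2|w|/(|w-1||w+1|(1-|w|))`. -/
theorem resolvent_norm_bound (p : ℝ≥0∞) [Fact (1 ≤ p)]
    (Δ : lp (fun _ : ℤ => ℂ) p →L[ℂ] lp (fun _ : ℤ => ℂ) p)
    (hΔ : ∀ (f : lp (fun _ : ℤ => ℂ) p) (n : ℤ), Δ f n = f (n - 1) + f (n + 1))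
    (w : ℂ) (hw : w ∈ ball (0 : ℂ) 1) (hw0 : w ≠ 0) :
    ∃ B : lp (fun _ : ℤ => ℂ) p →L[ℂ] lp (fun _ : ℤ => ℂ) p,
      B.comp ((w + w⁻¹) • ContinuousLinearMap.id ℂ (lp (fun _ : ℤ => ℂ) p) - Δ) =
        ContinuousLinearMap.id ℂ (lp (fun _ : ℤ => ℂ) p) ∧
      ((w + w⁻¹) • ContinuousLinearMap.id ℂ (lp (fun _ : ℤ => ℂ) p) - Δ).comp B =
        ContinuousLinearMap.id ℂ (lp (fun _ : ℤ => ℂ) p) ∧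
      ‖B‖ ≤ 2 * ‖w‖ /
        (‖w - 1‖ * ‖w + 1‖ * (1 - ‖w‖)) := by
  have hw1 : ‖w‖ < 1 := mem_ball_zero_iff.mp hw
  let e := lp.funCongrLeft ℂ ℂ p (Equiv.addRight (1 : ℤ))
  let shift := e.toContinuousLinearEquiv.toUnit
  have hΔ_shift : Δ = shift + ↑shift⁻¹ := by
    ext f n
    rw [hΔ, add_comm]
    rfl
  obtain ⟨v, hv, hv_norm⟩ := shift.exists_val_eq_joukowski_sub_add_inv
    e.toLinearIsometry.norm_toContinuousLinearMap_le
    e.symm.toLinearIsometry.norm_toContinuousLinearMap_le hw0 hw1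
  rw [← ContinuousLinearMap.one_def, hΔ_shift, ← hv]
  refine ⟨↑v⁻¹, v.inv_mul, v.mul_inv, hv_norm.trans ?_⟩
  have h_factor : ‖1 - w ^ 2‖ = ‖w - 1‖ * ‖w + 1‖ := by
    rw [← norm_mul, ← norm_neg]
    ring_nf
  rw [h_factor, mul_comm 2]
  gcongr
  linarith
end

section
/- Let w ∈ 𝔻 \ {0}, set z := w + w⁻¹, and let τ > 0. Then (1−|w|)^{3+τ} · |(w²−1)/w|^{1+τ} ≥ (2/(1+√2))^{3+τ} · dist(z, [−2, 2])^{3+τ} / |z² − 4|. -/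
/-!
Write `w = r u` with `r = |w|` and `|u| = 1`. The point `u + u⁻¹ = 2 Re u` lies in `[-2, 2]`, and
`w + w⁻¹ - (u + u⁻¹) = (1 - r) r⁻¹ u⁻¹ (1 - r u²)`, while `(w² - 1)/w = -(1 - r² u²)/(r u)`.
So everything reduces to `|1 - r v| ≤ (1 + √2)/2 · |1 - r² v|` for `|v| = 1`; the constant is sharp
at `v = -1`, `r = √2 - 1`. Finally `|z² - 4| = |(w² - 1)/w|²`, and raising the distance bound to
the power `3 + τ` gives the claim.
-/

open Complex Metric Set

lemma norm_one_sub_mul_le {v : ℂ} (hv : ‖v‖ = 1) {r : ℝ} (hr : 0 ≤ r) :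
    ‖1 - r * v‖ ≤ (1 + √2) / 2 * ‖1 - r ^ 2 * v‖ := by
  have hk : 1 ≤ (1 + √2) / 2 := by linarith [Real.one_lt_sqrt_two]
  set k := (1 + √2) / 2
  have sq_norm_one_sub (s : ℝ) : ‖1 - s * v‖ ^ 2 = 1 - 2 * s * v.re + s ^ 2 := by
    have h := Complex.sq_norm v
    rw [hv, normSq_apply] at h
    rw [Complex.sq_norm, normSq_apply]
    simp only [sub_re, sub_im, one_re, one_im, re_ofReal_mul, im_ofReal_mul]
    linear_combination -s ^ 2 * h
  have at_one : (1 - r) ^ 2 ≤ k ^ 2 * (1 - r ^ 2) ^ 2 := by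
    have : 1 ≤ (k * (1 + r)) ^ 2 := one_le_pow₀ (by nlinarith)
    nlinarith [mul_le_mul_of_nonneg_left this (sq_nonneg (1 - r))]
  have at_neg_one : (1 + r) ^ 2 ≤ k ^ 2 * (1 + r ^ 2) ^ 2 := by
    rw [← mul_pow]
    exact pow_le_pow_left₀ (by positivity) (one_add_le_mul_one_add_sq r) 2
  rw [← pow_le_pow_iff_left₀ (norm_nonneg _) (by positivity) two_ne_zero, mul_pow, ← ofReal_pow,
    sq_norm_one_sub, sq_norm_one_sub]
  obtain ⟨hc₁, hc₂⟩ := abs_le.mp (hv ▸ abs_re_le_norm v)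
  -- the difference of the two sides is affine in `v.re ∈ [-1, 1]`, so the endpoint cases suffice
  nlinarith [mul_nonneg (sub_nonneg.2 hc₂) (sub_nonneg.2 at_neg_one),
    mul_nonneg (neg_le_iff_add_nonneg.1 hc₁) (sub_nonneg.2 at_one)]

lemma add_inv_mem_Icc_of_norm_eq_one {u : ℂ} (hu : ‖u‖ = 1) :
    u + u⁻¹ ∈ (fun x : ℝ => (x : ℂ)) '' Icc (-2) 2 := by
  rw [inv_eq_conj hu, add_conj]
  obtain ⟨h₁, h₂⟩ := abs_le.mp (hu ▸ abs_re_le_norm u)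
  exact ⟨2 * u.re, ⟨by linarith, by linarith⟩, rfl⟩

lemma infDist_add_inv_Icc_le {w : ℂ} (hw : w ≠ 0) :
    infDist (w + w⁻¹) ((fun x : ℝ => (x : ℂ)) '' Icc (-2) 2) ≤
      (1 + √2) / 2 * |1 - ‖w‖| * ‖(w ^ 2 - 1) / w‖ := by
  set r := ‖w‖
  have hr : 0 < r := norm_pos_iff.2 hw
  have hrC : (r : ℂ) ≠ 0 := ofReal_ne_zero.2 hr.ne'
  set u := w / r
  have hu : ‖u‖ = 1 := by rw [norm_div, norm_real, Real.norm_of_nonneg hr.le, div_self hr.ne']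
  have hwu : w = r * u := by simp [u, mul_div_cancel₀ _ hrC]
  have hsub : w + w⁻¹ - (u + u⁻¹) = ((1 - r : ℝ) : ℂ) / r * u⁻¹ * (1 - r * u ^ 2) := by
    rw [hwu]; push_cast; field_simp; ring
  have hquot : (w ^ 2 - 1) / w = -(1 - r ^ 2 * u ^ 2) / (r * u) := by
    rw [hwu]; field_simp; ring
  calc infDist (w + w⁻¹) ((fun x : ℝ => (x : ℂ)) '' Icc (-2) 2)
      ≤ dist (w + w⁻¹) (u + u⁻¹) := infDist_le_dist_of_mem (add_inv_mem_Icc_of_norm_eq_one hu)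
    _ = |1 - r| / r * ‖1 - r * u ^ 2‖ := by
      rw [dist_eq, hsub, norm_mul, norm_mul, norm_inv, hu, norm_div, norm_real, norm_real,
        Real.norm_eq_abs, Real.norm_of_nonneg hr.le, inv_one, mul_one]
    _ ≤ |1 - r| / r * ((1 + √2) / 2 * ‖1 - r ^ 2 * u ^ 2‖) := by
      gcongr; exact norm_one_sub_mul_le (by rw [norm_pow, hu, one_pow]) hr.le
    _ = (1 + √2) / 2 * |1 - r| * ‖(w ^ 2 - 1) / w‖ := by
      rw [hquot, norm_div, norm_neg, norm_mul, hu, norm_real, Real.norm_eq_abs, abs_of_pos hr]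
      field_simp

lemma add_inv_sq_sub_four {w : ℂ} (hw : w ≠ 0) : (w + w⁻¹) ^ 2 - 4 = ((w ^ 2 - 1) / w) ^ 2 := by
  field_simp; ring

/-- For `w ∈ 𝔻 \ {0}`, `z = w + w⁻¹` and `τ > 0`:
`(1-|w|)^{3+τ}·|(w²-1)/w|^{1+τ} ≥ (2/(1+√2))^{3+τ}·dist(z,[-2,2])^{3+τ}/|z²-4|`. -/
theorem weight_transfer (w : ℂ) (hw : w ∈ ball (0 : ℂ) 1) (hw0 : w ≠ 0)
    (τ : ℝ) (hτ : 0 < τ) :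
    (2 / (1 + Real.sqrt 2)) ^ (3 + τ) *
        (Metric.infDist (w + w⁻¹) ((fun x : ℝ => (x : ℂ)) '' Set.Icc (-2 : ℝ) 2)) ^ (3 + τ) /
        ‖(w + w⁻¹) ^ 2 - 4‖ ≤
      (1 - ‖w‖) ^ (3 + τ) * ‖(w ^ 2 - 1) / w‖ ^ (1 + τ) := by
  set d := infDist (w + w⁻¹) ((fun x : ℝ => (x : ℂ)) '' Icc (-2 : ℝ) 2)
  set a := ‖(w ^ 2 - 1) / w‖
  have hr : 0 ≤ 1 - ‖w‖ := sub_nonneg.2 (mem_ball_zero_iff.1 hw).le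
  have hw2 : w ^ 2 ≠ 1 := fun h ↦ by
    have := congrArg norm h
    rw [norm_pow, norm_one] at this
    exact (pow_lt_one₀ (norm_nonneg w) (mem_ball_zero_iff.1 hw) two_ne_zero).ne this
  have ha : 0 < a := norm_pos_iff.2 (div_ne_zero (sub_ne_zero.2 hw2) hw0)
  have hd : 2 / (1 + √2) * d ≤ (1 - ‖w‖) * a := by
    have := infDist_add_inv_Icc_le hw0
    rw [abs_of_nonneg hr] at this
    rw [div_mul_eq_mul_div, div_le_iff₀ (by positivity)]
    linarith
  rw [add_inv_sq_sub_four hw0, norm_pow, ← Real.mul_rpow (by positivity) infDist_nonneg,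
    div_le_iff₀ (pow_pos ha 2)]
  calc (2 / (1 + √2) * d) ^ (3 + τ) ≤ ((1 - ‖w‖) * a) ^ (3 + τ) :=
        Real.rpow_le_rpow (mul_nonneg (by positivity) infDist_nonneg) hd (by linarith)
    _ = (1 - ‖w‖) ^ (3 + τ) * a ^ (1 + τ) * a ^ 2 := by
        rw [Real.mul_rpow hr ha.le, show 3 + τ = (1 + τ) + 2 by ring, Real.rpow_add ha,
          Real.rpow_two, mul_assoc]
end

section
/- Let τ > 0, A ≥ 0, and let S ⊆ ℂ \ [−2, 2] be a set such that for every finite subset F ⊆ S one has ∑_{z∈F} dist(z, [−2, 2])^{3+τ} / |z² − 4| ≤ A. Let 0 < r < R and define M := {z ∈ ℂ : Re z < −2 and r < |z + 2| < R}. Then S ∩ M is finite with cardinality #(S ∩ M) ≤ (R(R + 4)/r^{3+τ}) · A. -/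
/-!
On `M` the point of `[-2, 2]` closest to `z` is `-2`, so `dist(z, [-2, 2]) ≥ |z + 2| > r`, while
`|z² - 4| = |z + 2| |z - 2| ≤ R (R + 4)`. Hence every point of `S ∩ M` contributes at least
`r^{3+τ} / (R (R + 4))` to the sum, and a sum of at most `A` has at most
`A R (R + 4) / r^{3+τ}` such terms.
-/

open Set Metric

lemma Set.finite_and_ncard_le_of_forall_finset_sum_le {α : Type*} {T : Set α} {f : α → ℝ}
    {c A : ℝ} (hc : 0 < c) (hf : ∀ z ∈ T, c ≤ f z)
    (hsum : ∀ F : Finset α, ↑F ⊆ T → ∑ z ∈ F, f z ≤ A) :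
    T.Finite ∧ (T.ncard : ℝ) ≤ A / c := by
  have card_le : ∀ F : Finset α, ↑F ⊆ T → (F.card : ℝ) ≤ A / c := by
    intro F hF
    rw [le_div_iff₀ hc, ← nsmul_eq_mul]
    exact (F.card_nsmul_le_sum f c fun z hz => hf z (hF hz)).trans (hsum F hF)
  have hT : T.Finite := by
    by_contra hinf
    obtain ⟨F, hFT, hF⟩ := Set.Infinite.exists_subset_card_eq hinf (⌈A / c⌉₊ + 1)
    have := card_le F hFT
    rw [hF, Nat.cast_add, Nat.cast_one] at this
    linarith [Nat.le_ceil (A / c)]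
  refine ⟨hT, ?_⟩
  rw [Set.ncard_eq_toFinset_card T hT]
  exact card_le _ (by simp)

lemma Complex.norm_sub_ofReal_le_norm_sub_ofReal {z : ℂ} {a x : ℝ} (hz : z.re ≤ a)
    (hax : a ≤ x) : ‖z - a‖ ≤ ‖z - x‖ := by
  rw [← sq_le_sq₀ (norm_nonneg _) (norm_nonneg _), Complex.sq_norm, Complex.sq_norm,
    Complex.normSq_apply, Complex.normSq_apply]
  simp only [Complex.sub_re, Complex.sub_im, Complex.ofReal_re, Complex.ofReal_im, sub_zero]
  nlinarith

lemma Complex.norm_sub_le_infDist_Icc {z : ℂ} {a b : ℝ} (hab : a ≤ b) (hz : z.re ≤ a) :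
    ‖z - a‖ ≤ infDist z ((fun x : ℝ => (x : ℂ)) '' Icc a b) := by
  rw [le_infDist ((nonempty_Icc.mpr hab).image _)]
  rintro _ ⟨x, hx, rfl⟩
  rw [Complex.dist_eq]
  exact norm_sub_ofReal_le_norm_sub_ofReal hz hx.1

lemma Complex.norm_sq_sub_four_le (z : ℂ) : ‖z ^ 2 - 4‖ ≤ ‖z + 2‖ * (‖z + 2‖ + 4) := by
  have hz2 : ‖z - 2‖ ≤ ‖z + 2‖ + 4 := by
    simpa [sub_eq_add_neg, add_assoc, show (2 : ℂ) + -4 = -2 by norm_num] using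
      norm_add_le (z + 2) (-4)
  rw [show z ^ 2 - 4 = (z + 2) * (z - 2) by ring, norm_mul]
  exact mul_le_mul_of_nonneg_left hz2 (norm_nonneg _)

lemma Complex.four_le_norm_sub_two {z : ℂ} (hz : z.re ≤ -2) : 4 ≤ ‖z - 2‖ :=
  calc (4 : ℝ) ≤ |(z - 2).re| := by
        rw [Complex.sub_re, abs_of_nonpos] <;> norm_num <;> linarith
    _ ≤ ‖z - 2‖ := Complex.abs_re_le_norm _

lemma Complex.rpow_div_le_infDist_rpow_div_norm_sq_sub_four {p r R : ℝ} (hp : 0 ≤ p) (hr : 0 < r)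
    {z : ℂ} (hz : z.re ≤ -2) (hrz : r ≤ ‖z + 2‖) (hzR : ‖z + 2‖ ≤ R) :
    r ^ p / (R * (R + 4)) ≤
      infDist z ((fun x : ℝ => (x : ℂ)) '' Icc (-2 : ℝ) 2) ^ p / ‖z ^ 2 - 4‖ := by
  have hdist : ‖z + 2‖ ≤ infDist z ((fun x : ℝ => (x : ℂ)) '' Icc (-2 : ℝ) 2) := by
    simpa using norm_sub_le_infDist_Icc (by norm_num : (-2 : ℝ) ≤ 2) (by simpa using hz)
  have hpos : 0 < ‖z ^ 2 - 4‖ := by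
    rw [show z ^ 2 - 4 = (z + 2) * (z - 2) by ring, norm_mul]
    exact mul_pos (hr.trans_le hrz) (by linarith [four_le_norm_sub_two hz])
  have hle : ‖z ^ 2 - 4‖ ≤ R * (R + 4) := by
    have hR : 0 ≤ R := hr.le.trans (hrz.trans hzR)
    exact (norm_sq_sub_four_le z).trans (by gcongr)
  exact div_le_div₀ (Real.rpow_nonneg infDist_nonneg _)
    (Real.rpow_le_rpow hr.le (hrz.trans hdist) hp) hpos hle

theorem eigenvalue_count_left_general (τ : ℝ) (hτ : 0 < τ) (A : ℝ)
    (S : Set ℂ)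
    (hsum : ∀ F : Finset ℂ, ↑F ⊆ S →
      ∑ z ∈ F, (Metric.infDist z ((fun x : ℝ => (x : ℂ)) '' Set.Icc (-2 : ℝ) 2)) ^ (3 + τ) /
        ‖z ^ 2 - 4‖ ≤ A)
    (r R : ℝ) (hr : 0 < r) (hrR : r < R) :
    (S ∩ {z : ℂ | z.re < -2 ∧ r < ‖z + 2‖ ∧ ‖z + 2‖ < R}).Finite ∧
    ((S ∩ {z : ℂ | z.re < -2 ∧ r < ‖z + 2‖ ∧
        ‖z + 2‖ < R}).ncard : ℝ) ≤ R * (R + 4) / r ^ (3 + τ) * A := by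
  have hR : 0 < R := hr.trans hrR
  have hc : 0 < r ^ (3 + τ) / (R * (R + 4)) := by positivity
  rw [show R * (R + 4) / r ^ (3 + τ) * A = A / (r ^ (3 + τ) / (R * (R + 4))) by
    rw [div_div_eq_mul_div]; ring]
  exact Set.finite_and_ncard_le_of_forall_finset_sum_le hc
    (fun z hz => Complex.rpow_div_le_infDist_rpow_div_norm_sq_sub_four
      (by linarith) hr hz.2.1.le hz.2.2.1.le hz.2.2.2.le)
    (fun F hF => hsum F (hF.trans inter_subset_left))

/-- Eigenvalue counting in the region `M = {Re z < -2, r < |z+2| < R}`: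
a Lieb–Thirring type bound with constant `A` implies
`#(S ∩ M) ≤ (R(R+4)/r^{3+τ})·A`. -/
theorem eigenvalue_count_left (τ : ℝ) (hτ : 0 < τ) (A : ℝ) (hA : 0 ≤ A)
    (S : Set ℂ) (hS : S ⊆ ((fun x : ℝ => (x : ℂ)) '' Set.Icc (-2 : ℝ) 2)ᶜ)
    (hsum : ∀ F : Finset ℂ, ↑F ⊆ S →
      ∑ z ∈ F, (Metric.infDist z ((fun x : ℝ => (x : ℂ)) '' Set.Icc (-2 : ℝ) 2)) ^ (3 + τ) /
        ‖z ^ 2 - 4‖ ≤ A)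
    (r R : ℝ) (hr : 0 < r) (hrR : r < R) :
    (S ∩ {z : ℂ | z.re < -2 ∧ r < ‖z + 2‖ ∧ ‖z + 2‖ < R}).Finite ∧
    ((S ∩ {z : ℂ | z.re < -2 ∧ r < ‖z + 2‖ ∧
        ‖z + 2‖ < R}).ncard : ℝ) ≤ R * (R + 4) / r ^ (3 + τ) * A :=
  eigenvalue_count_left_general τ hτ A S hsum r R hr hrR
end
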